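/- Let n ≥ 4 and 2 ≤ k ≤ n−1. Let C_k = {G ∈ M_{n−2}(K_n) : {i,i+1} ∉ G for every i ∈ [k−1], deg_G(1) = n−2, deg_G(i) = n−3 for every i ∈ {2,...,k−1}, deg_G(k) < n−2, and for every j ∈ {k+1,...,n}, {k,j} ∉ G and deg_G(j) = n−2}, and let B_{k,k+1} = {G ∈ M_{n−2}(K_n) : {i,i+1} ∉ G for every i ∈ [k], deg_G(1) = n−2, deg_G(i) = n−3 for every i ∈ {2,...,k}, and deg_G(k+1) < n−2}. If G ∈ C_k and B_{k,k+1} ≠ ∅, then for all k+1 ≤ i < j ≤ n, neither G ∖ {{i,j}} nor G ∪ {{i,j}} belongs to B_{k,k+1}. -/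

import Mathlib

/-- Degree of vertex `v` in the edge set `H`. -/
def deg (H : Finset (Sym2 ℕ)) (v : ℕ) : ℕ := (H.filter (fun e => v ∈ e)).card

/-- Edge set of the complete graph `K_n` on vertex set `{1,…,n}`. -/
def EK (n : ℕ) : Finset (Sym2 ℕ) := (Finset.Icc 1 n).sym2.filter (fun e => ¬ e.IsDiag)

/-- The `r`-matching complex of `K_n`, as its set of faces. -/
def MK (n r : ℕ) : Set (Finset (Sym2 ℕ)) := {H | H ⊆ EK n ∧ ∀ v, deg H v ≤ r}

/-
The edge `{i,j}` misses vertex `k`, so toggling it does not change `deg_G(k)`. In `G ∈ C_k` the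
vertex `k` is adjacent neither to `k-1` nor to any of `k+1, …, n`, so `deg_G(k) ≤ k-2`, while
`j ≤ n` forces `k + 2 ≤ n`; hence `deg(k) ≤ k-2 < n-3`, the degree every member of
`B_{k,k+1}` has at `k`.
-/

lemma deg_erase_of_notMem {H : Finset (Sym2 ℕ)} {e : Sym2 ℕ} {v : ℕ} (hv : v ∉ e) :
    deg (H.erase e) v = deg H v := by
  rw [deg, deg, Finset.filter_erase, Finset.erase_eq_of_notMem]
  exact fun h => hv (Finset.mem_filter.mp h).2

lemma deg_insert_of_notMem {H : Finset (Sym2 ℕ)} {e : Sym2 ℕ} {v : ℕ} (hv : v ∉ e) :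
    deg (insert e H) v = deg H v := by
  rw [deg, deg, Finset.filter_insert, if_neg hv]

lemma deg_le_card_of_forall_mem {H : Finset (Sym2 ℕ)} {v : ℕ} {S : Finset ℕ}
    (hS : ∀ m, s(v, m) ∈ H → m ∈ S) : deg H v ≤ S.card := by
  have hsub : H.filter (fun e => v ∈ e) ⊆ S.image (fun m => s(v, m)) := by
    intro e he
    obtain ⟨heH, hve⟩ := Finset.mem_filter.mp he
    obtain ⟨m, rfl⟩ := Sym2.mem_iff_exists.mp hve
    exact Finset.mem_image_of_mem _ (hS m heH)
  exact (Finset.card_le_card hsub).trans Finset.card_image_le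

lemma mem_Icc_and_ne_of_mem_EK {n v m : ℕ} (h : s(v, m) ∈ EK n) :
    m ∈ Finset.Icc 1 n ∧ m ≠ v := by
  rw [EK, Finset.mem_filter, Finset.mk_mem_sym2_iff, Sym2.mk_isDiag_iff] at h
  exact ⟨h.1.2, Ne.symm h.2⟩

lemma deg_le_sub_two_of_notMem_edges_above {n k : ℕ} {H : Finset (Sym2 ℕ)} (hH : H ⊆ EK n)
    (hprev : s(k - 1, k) ∉ H) (habove : ∀ j ∈ Finset.Icc (k + 1) n, s(k, j) ∉ H) :
    deg H k ≤ k - 2 := by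
  calc deg H k ≤ (Finset.Icc 1 (k - 2)).card := by
        refine deg_le_card_of_forall_mem fun m hm => ?_
        obtain ⟨hmn, hmk⟩ := mem_Icc_and_ne_of_mem_EK (hH hm)
        have hm_prev : m ≠ k - 1 := by
          rintro rfl
          exact hprev (Sym2.eq_swap ▸ hm)
        have hm_above : m ∉ Finset.Icc (k + 1) n := fun h => habove m h hm
        simp only [Finset.mem_Icc] at hmn hm_above ⊢
        omega
    _ = k - 2 := by simp

theorem Ck_not_matched_with_Bk_general (n k : ℕ) (hk : 2 ≤ k)
    (G : Finset (Sym2 ℕ))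
    (hG : G ∈ ({G ∈ MK n (n - 2) | (∀ i ∈ Finset.Icc 1 (k - 1), s(i, i + 1) ∉ G) ∧
      deg G 1 = n - 2 ∧ (∀ i ∈ Finset.Icc 2 (k - 1), deg G i = n - 3) ∧
      deg G k < n - 2 ∧
      ∀ j ∈ Finset.Icc (k + 1) n, s(k, j) ∉ G ∧ deg G j = n - 2} :
        Set (Finset (Sym2 ℕ)))) :
    let B : Set (Finset (Sym2 ℕ)) :=
      {G ∈ MK n (n - 2) | (∀ i ∈ Finset.Icc 1 k, s(i, i + 1) ∉ G) ∧
        deg G 1 = n - 2 ∧ (∀ i ∈ Finset.Icc 2 k, deg G i = n - 3) ∧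
        deg G (k + 1) < n - 2}
    B ≠ ∅ →
      ∀ i j, k + 1 ≤ i → i < j → j ≤ n →
        G.erase s(i, j) ∉ B ∧ insert s(i, j) G ∉ B := by
  intro B _ i j hi hij hj
  obtain ⟨⟨hGsub, -⟩, hGpath, -, -, -, hGabove⟩ := hG
  have hprev : s(k - 1, k) ∉ G := by
    simpa [Nat.sub_add_cancel (by omega : 1 ≤ k)] using
      hGpath (k - 1) (Finset.mem_Icc.mpr ⟨by omega, le_rfl⟩)
  have hdeg : deg G k ≤ k - 2 :=
    deg_le_sub_two_of_notMem_edges_above hGsub hprev fun j hj => (hGabove j hj).1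
  have hk_notMem : k ∉ s(i, j) := by
    rw [Sym2.mem_iff]
    omega
  have notMem_B : ∀ G' : Finset (Sym2 ℕ), deg G' k = deg G k → G' ∉ B := by
    rintro G' hG' ⟨-, -, -, hB, -⟩
    have := hB k (Finset.mem_Icc.mpr ⟨hk, le_rfl⟩)
    omega
  exact ⟨notMem_B _ (deg_erase_of_notMem hk_notMem),
    notMem_B _ (deg_insert_of_notMem hk_notMem)⟩

/-- Proposition 3.6(5): if `G ∈ C_k` and `B_{k,k+1} ≠ ∅`, then for all
`k+1 ≤ i < j ≤ n`, neither `G - {i,j}` nor `G + {i,j}` belongs to `B_{k,k+1}`. -/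
theorem Ck_not_matched_with_Bk (n k : ℕ) (hn : 4 ≤ n) (hk : 2 ≤ k) (hkn : k ≤ n - 1)
    (G : Finset (Sym2 ℕ))
    (hG : G ∈ ({G ∈ MK n (n - 2) | (∀ i ∈ Finset.Icc 1 (k - 1), s(i, i + 1) ∉ G) ∧
      deg G 1 = n - 2 ∧ (∀ i ∈ Finset.Icc 2 (k - 1), deg G i = n - 3) ∧
      deg G k < n - 2 ∧
      ∀ j ∈ Finset.Icc (k + 1) n, s(k, j) ∉ G ∧ deg G j = n - 2} :
        Set (Finset (Sym2 ℕ)))) :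
    let B : Set (Finset (Sym2 ℕ)) :=
      {G ∈ MK n (n - 2) | (∀ i ∈ Finset.Icc 1 k, s(i, i + 1) ∉ G) ∧
        deg G 1 = n - 2 ∧ (∀ i ∈ Finset.Icc 2 k, deg G i = n - 3) ∧
        deg G (k + 1) < n - 2}
    B ≠ ∅ →
      ∀ i j, k + 1 ≤ i → i < j → j ≤ n →
        G.erase s(i, j) ∉ B ∧ insert s(i, j) G ∉ B :=
  Ck_not_matched_with_Bk_general n k hk G hG
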